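/- Let D ≥ 1, k ≥ 1, and let E : Fin D → ℝ satisfy the k-th no-resonance condition. Let U_t be the D×D diagonal matrix with entries exp(−i·E_j·t), and let U_t^{⊗k} denote its k-fold Kronecker power, acting on matrices indexed by tuples Fin k → Fin D. Then for every complex matrix A indexed by (Fin k → Fin D) × (Fin k → Fin D), the limit lim_{T→∞} (1/T) ∫₀^T U_t^{⊗k} A (U_t^{⊗k})^† dt exists, and its (α, β) entry equals A_{α,β} if β is a rearrangement of α (i.e., there exists a permutation σ of Fin k with β = α ∘ σ), and equals 0 otherwise. -/

import Mathlib

/-!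
In the eigenbasis of the Hamiltonian, conjugating by `Uₜ^{⊗k}` multiplies the `(α, β)` entry by
the phase `exp (i (E_β - E_α) t)`, where `E_α = ∑ⱼ E (α j)`. The time average of this phase is
`1` when the frequency `E_β - E_α` vanishes and `0` otherwise, and by the no-resonance condition
the frequency vanishes exactly when `β` is a rearrangement of `α`.
-/

open Filter MeasureTheory Matrix

/-- The `k`-th no-resonance condition for a family of energy levels `E : Fin D → ℝ`. -/
def NoResonance (D k : ℕ) (E : Fin D → ℝ) : Prop :=
  ∀ α β : Fin k → Fin D, (∑ j, E (α j)) = (∑ j, E (β j)) →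
    ∃ σ : Equiv.Perm (Fin k), β = α ∘ σ

open Complex Topology

theorem tendsto_average_integral_exp_mul_I_of_ne_zero {ω : ℝ} (hω : ω ≠ 0) :
    Tendsto (fun T : ℝ => (1 / T : ℂ) * ∫ t in (0:ℝ)..T, exp (ω * t * I)) atTop (𝓝 0) := by
  have hc : (ω * I : ℂ) ≠ 0 := mul_ne_zero (ofReal_ne_zero.mpr hω) I_ne_zero
  have hint : ∀ T : ℝ,
      ∫ t in (0:ℝ)..T, exp (ω * t * I) = (exp (ω * T * I) - 1) / (ω * I) := by
    intro T
    simpa [mul_right_comm _ I] using integral_exp_mul_complex (a := 0) (b := T) hc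
  have hbound : ∀ T : ℝ, ‖(exp (ω * T * I) - 1) / (ω * I)‖ ≤ 2 / |ω| := by
    intro T
    rw [norm_div, norm_mul, norm_I, mul_one, norm_real, Real.norm_eq_abs]
    gcongr
    calc ‖exp (ω * T * I) - 1‖ ≤ ‖exp (ω * T * I)‖ + ‖(1 : ℂ)‖ := norm_sub_le _ _
      _ = 2 := by rw [← ofReal_mul, norm_exp_ofReal_mul_I, norm_one]; norm_num
  have hinv : Tendsto (fun T : ℝ => (1 / T : ℂ)) atTop (𝓝 0) := by
    simpa [Function.comp_def] using (continuous_ofReal.tendsto 0).comp tendsto_inv_atTop_zero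
  simp_rw [hint]
  exact hinv.zero_mul_isBoundedUnder_le (isBoundedUnder_of ⟨2 / |ω|, hbound⟩)

theorem tendsto_average_integral_exp_mul_I (ω : ℝ) :
    Tendsto (fun T : ℝ => (1 / T : ℂ) * ∫ t in (0:ℝ)..T, exp (ω * t * I)) atTop
      (𝓝 (if ω = 0 then 1 else 0)) := by
  split_ifs with hω
  · subst hω
    refine tendsto_const_nhds.congr' ?_
    filter_upwards [eventually_ne_atTop 0] with T hT
    simp [hT]
  · exact tendsto_average_integral_exp_mul_I_of_ne_zero hω

theorem NoResonance.exists_perm_iff {D k : ℕ} {E : Fin D → ℝ} (hNR : NoResonance D k E)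
    (α β : Fin k → Fin D) :
    (∃ σ : Equiv.Perm (Fin k), β = α ∘ σ) ↔ ∑ j, E (α j) = ∑ j, E (β j) := by
  refine ⟨?_, hNR α β⟩
  rintro ⟨σ, rfl⟩
  exact (Equiv.sum_comp σ (fun j => E (α j))).symm

theorem prod_exp_neg_I_mul {ι : Type*} (s : Finset ι) (e : ι → ℝ) (t : ℝ) :
    ∏ j ∈ s, exp (-(I * e j * t)) = exp (-(I * ((∑ j ∈ s, e j : ℝ) : ℂ) * t)) := by
  rw [← exp_sum]
  push_cast
  rw [Finset.mul_sum, Finset.sum_mul, Finset.sum_neg_distrib]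

theorem diagonal_mul_mul_conjTranspose_diagonal_apply {n R : Type*} [Fintype n] [DecidableEq n]
    [Semiring R] [StarRing R] (d : n → R) (A : Matrix n n R) (i j : n) :
    (diagonal d * A * (diagonal d)ᴴ) i j = d i * A i j * star (d j) := by
  rw [diagonal_conjTranspose, mul_diagonal, diagonal_mul]
  rfl

theorem exp_neg_I_mul_mul_mul_star_exp_neg_I_mul (a b t : ℝ) (z : ℂ) :
    exp (-(I * a * t)) * z * star (exp (-(I * b * t))) = exp (↑(b - a) * t * I) * z := by
  rw [star_def, ← exp_conj, mul_right_comm, ← exp_add]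
  congr 2
  simp only [map_neg, map_mul, conj_I, conj_ofReal]
  push_cast
  ring

theorem kth_hamiltonian_twirling_identity_general
    (D k : ℕ) (E : Fin D → ℝ) (hNR : NoResonance D k E)
    (Uk : ℝ → Matrix (Fin k → Fin D) (Fin k → Fin D) ℂ)
    (hUk : ∀ t, Uk t = Matrix.diagonal
      fun α : Fin k → Fin D => ∏ j, Complex.exp (-(Complex.I * (E (α j) : ℂ) * (t : ℂ))))
    (A : Matrix (Fin k → Fin D) (Fin k → Fin D) ℂ) :
    ∀ α β : Fin k → Fin D,
      Tendsto
        (fun T : ℝ => (1 / T : ℂ) *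
          ∫ t in (0:ℝ)..T, ((Uk t) * A * (Uk t)ᴴ) α β)
        atTop
        (nhds (if ∃ σ : Equiv.Perm (Fin k), β = α ∘ σ then A α β else 0)) := by
  intro α β
  set ω : ℝ := ∑ j, E (β j) - ∑ j, E (α j)
  have hentry : ∀ t : ℝ, (Uk t * A * (Uk t)ᴴ) α β = exp (ω * t * I) * A α β := fun t => by
    rw [hUk, diagonal_mul_mul_conjTranspose_diagonal_apply, prod_exp_neg_I_mul,
      prod_exp_neg_I_mul, exp_neg_I_mul_mul_mul_star_exp_neg_I_mul]
  have hlimit : (if ω = 0 then 1 else 0) * A α β =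
      if ∃ σ : Equiv.Perm (Fin k), β = α ∘ σ then A α β else 0 := by
    simp only [hNR.exists_perm_iff, ω, sub_eq_zero, eq_comm (a := ∑ j, E (β j))]
    split_ifs <;> simp
  simp_rw [hentry, intervalIntegral.integral_mul_const, ← mul_assoc, ← hlimit]
  exact (tendsto_average_integral_exp_mul_I ω).mul_const _

/-- `k`-th Hamiltonian twirling identity: under the `k`-th no-resonance condition, the
infinite-time average of `Uₜ^{⊗k} A (Uₜ^{⊗k})ᴴ` exists entrywise, and its `(α, β)` entry
equals `A α β` if `β` is a rearrangement of `α`, and `0` otherwise. -/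
theorem kth_hamiltonian_twirling_identity
    (D k : ℕ) (hD : 1 ≤ D) (hk : 1 ≤ k) (E : Fin D → ℝ) (hNR : NoResonance D k E)
    (Uk : ℝ → Matrix (Fin k → Fin D) (Fin k → Fin D) ℂ)
    (hUk : ∀ t, Uk t = Matrix.diagonal
      fun α : Fin k → Fin D => ∏ j, Complex.exp (-(Complex.I * (E (α j) : ℂ) * (t : ℂ))))
    (A : Matrix (Fin k → Fin D) (Fin k → Fin D) ℂ) :
    ∀ α β : Fin k → Fin D,
      Tendsto
        (fun T : ℝ => (1 / T : ℂ) *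
          ∫ t in (0:ℝ)..T, ((Uk t) * A * (Uk t)ᴴ) α β)
        atTop
        (nhds (if ∃ σ : Equiv.Perm (Fin k), β = α ∘ σ then A α β else 0)) :=
  kth_hamiltonian_twirling_identity_general D k E hNR Uk hUk A
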